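/- Let F be a finite field of characteristic 5 with |F| = q = 5^k where q ≡ 1 (mod 6), and G = C_3 × D_10. Then U(FG) ≅ V ⋊ C_{5^k−1}⁶ where V = 1 + J(FG). -/

import Mathlib

/-!
Let `T = C₃ × C₂` and let `π : G → T` be the quotient of `G = C₃ × D₁₀` by the normal subgroup
`⟨r⟩ ≅ C₅` of rotations; it is split by the inclusion `T ≤ G`. Since `q ≡ 1 (mod 6)`, `F` contains
all values of the six characters of `T`, and evaluation at them is an isomorphism `FT ≅ F⁶`.
The kernel of `ρ : FG → FT ≅ F⁶` is contained in the left ideal `FG (r - 1)`, which is nil: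
`(r - 1)⁵ = r⁵ - 1 = 0` in characteristic `5`, and `(r - 1) FG ⊆ FG (r - 1)` as `⟨r⟩` is normal.
So `ker ρ = J(FG)`, and the ring section `F⁶ ≅ FT → FG` splits the surjection of unit groups
`U(FG) → (F⁶)ˣ ≅ C_{q-1}⁶`, whose kernel is `1 + J(FG)`.
-/

theorem MonoidHom.nonempty_mulEquiv_semidirectProduct_ker {G Q : Type*} [Group G] [Group Q]
    (P : G →* Q) (S : Q →* G) (hPS : P.comp S = MonoidHom.id Q) :
    Nonempty (G ≃* P.ker ⋊[MulAut.conjNormal.comp S] Q) := by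
  have hPS' (q : Q) : P (S q) = q := DFunLike.congr_fun hPS q
  let e : P.ker ⋊[MulAut.conjNormal.comp S] Q →* G :=
    SemidirectProduct.lift P.ker.subtype S fun q => by ext; simp [MulAut.conjNormal_apply]
  have he (x : P.ker ⋊[MulAut.conjNormal.comp S] Q) : e x = x.left * S x.right := rfl
  refine ⟨(MulEquiv.ofBijective e ⟨fun x y hxy => ?_, fun g => ?_⟩).symm⟩
  · rw [he, he] at hxy
    have hright : x.right = y.right := by
      simpa [MonoidHom.mem_ker.mp x.left.2, MonoidHom.mem_ker.mp y.left.2, hPS'] using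
        congrArg P hxy
    rw [hright, mul_left_inj] at hxy
    exact SemidirectProduct.ext (Subtype.ext hxy) hright
  · exact ⟨⟨⟨g * (S (P g))⁻¹, by simp [hPS']⟩, P g⟩, by simp [he]⟩

theorem Units.exists_semidirectProduct_of_comp_eq_id {A B Q : Type*} [Ring A] [Ring B] [Group Q]
    (ρ : A →+* B) (s : B →+* A) (hs : ρ.comp s = RingHom.id B) (E : Bˣ ≃* Q) :
    ∃ H : Subgroup Aˣ, (∀ u : Aˣ, u ∈ H ↔ (u : A) - 1 ∈ RingHom.ker ρ) ∧
      ∃ φ : Q →* MulAut H, Nonempty (Aˣ ≃* H ⋊[φ] Q) := by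
  let P : Aˣ →* Q := E.toMonoidHom.comp (Units.map ρ)
  let S : Q →* Aˣ := (Units.map s).comp E.symm.toMonoidHom
  have hρs (v : Bˣ) : Units.map (ρ : A →* B) (Units.map (s : B →* A) v) = v :=
    Units.ext (RingHom.congr_fun hs v)
  have hPS : P.comp S = MonoidHom.id Q := by
    ext q
    simp [P, S, hρs]
  refine ⟨P.ker, fun u => ?_, _, P.nonempty_mulEquiv_semidirectProduct_ker S hPS⟩
  simp [P, RingHom.mem_ker, sub_eq_zero, Units.ext_iff]

namespace Ideal

variable {R : Type*} [Ring R]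

theorem le_jacobson_bot_of_isNilpotent {I : Ideal R} (hI : ∀ x ∈ I, IsNilpotent x) :
    I ≤ jacobson ⊥ := by
  intro x hx
  refine mem_jacobson_iff.mpr fun y => ?_
  obtain ⟨u, hu⟩ := (hI _ (I.mul_mem_left y hx)).isUnit_add_one
  exact ⟨↑u⁻¹, by simp [mul_assoc, ← mul_add_one, ← hu]⟩

theorem jacobson_bot_le_ker_of_surjective {ι K : Type*} [DivisionRing K]
    (ρ : R →+* (ι → K)) (hρ : Function.Surjective ρ) : jacobson ⊥ ≤ RingHom.ker ρ := by
  intro x hx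
  ext i
  let ρi := (Pi.evalRingHom (fun _ => K) i).comp ρ
  have : (RingHom.ker ρi).IsMaximal :=
    RingHom.ker_isMaximal_of_surjective ρi ((Function.surjective_eval i).comp hρ)
  exact mem_sInf.mp hx ⟨bot_le, this⟩

theorem jacobson_bot_eq_ker_of_isNilpotent {ι K : Type*} [DivisionRing K]
    (ρ : R →+* (ι → K)) (hρ : Function.Surjective ρ)
    (hnil : ∀ x ∈ RingHom.ker ρ, IsNilpotent x) : jacobson ⊥ = RingHom.ker ρ :=
  le_antisymm (jacobson_bot_le_ker_of_surjective ρ hρ) (le_jacobson_bot_of_isNilpotent hnil)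

theorem pow_eq_zero_of_mem_span_singleton {δ : R} {n : ℕ} (hδ : ∀ z, δ * z ∈ span {δ})
    (hn : δ ^ n = 0) {x : R} (hx : x ∈ span {δ}) : x ^ n = 0 := by
  suffices ∀ m : ℕ, ∃ c, x ^ m = c * δ ^ m by
    obtain ⟨c, hc⟩ := this n
    rw [hc, hn, mul_zero]
  obtain ⟨a, rfl⟩ := mem_span_singleton'.mp hx
  intro m
  induction m with
  | zero => exact ⟨1, by simp⟩
  | succ m ih =>
    obtain ⟨c, hc⟩ := ih
    obtain ⟨d, hd⟩ := mem_span_singleton'.mp (hδ c)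
    refine ⟨a * d, ?_⟩
    rw [pow_succ', hc, pow_succ']
    simp only [mul_assoc]
    rw [← mul_assoc δ, ← hd]
    simp only [mul_assoc]

theorem pow_sub_one_mem_span_sub_one (x : R) (m : ℕ) : x ^ m - 1 ∈ span {x - 1} :=
  mem_span_singleton'.mpr ⟨∑ i ∈ Finset.range m, x ^ i, geom_sum_mul x m⟩

end Ideal

theorem FiniteField.hasEnoughRootsOfUnity_of_dvd {F : Type*} [Field F] [Fintype F] {n : ℕ}
    (hn : n ∣ Fintype.card F - 1) : HasEnoughRootsOfUnity F n := by
  classical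
  have hq : 0 < Fintype.card F - 1 := by
    have := Fintype.one_lt_card (α := F)
    omega
  have : NeZero n := ⟨by rintro rfl; rw [zero_dvd_iff] at hn; omega⟩
  obtain ⟨g, hg⟩ := IsCyclic.exists_ofOrder_eq_natCard (α := Fˣ)
  rw [Nat.card_eq_fintype_card, Fintype.card_units] at hg
  obtain ⟨m, hm⟩ := hn
  have hζ := (hg ▸ IsPrimitiveRoot.orderOf g).pow hq (hm.trans (mul_comm n m))
  exact ⟨⟨_, IsPrimitiveRoot.coe_units_iff.mpr hζ⟩, rootsOfUnity.isCyclic F n⟩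

namespace MonoidAlgebra

section Characters

variable (F T : Type*) [Field F] [CommGroup T]

/-- The discrete Fourier transform of `F[T]`. -/
noncomputable def charEval : MonoidAlgebra F T →ₐ[F] ((T →* Fˣ) → F) :=
  AlgHom.pi fun χ => lift F F T ((Units.coeHom F).comp χ)

variable [Fintype T] [HasEnoughRootsOfUnity F (Monoid.exponent T)]

theorem span_range_coe_characters :
    Submodule.span F (Set.range fun (χ : T →* Fˣ) (t : T) => (χ t : F)) = ⊤ := by
  have : Fintype (T →* Fˣ) := Fintype.ofFinite _
  have hli : LinearIndependent F fun (χ : T →* Fˣ) (t : T) => (χ t : F) :=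
    (linearIndependent_monoidHom T F).comp (fun χ => (Units.coeHom F).comp χ)
      fun χ ψ h => MonoidHom.ext fun t => Units.ext (DFunLike.congr_fun h t)
  refine hli.span_eq_top_of_card_eq_finrank ?_
  rw [Module.finrank_fintype_fun_eq_card, ← Nat.card_eq_fintype_card,
    CommGroup.card_monoidHom_of_hasEnoughRootsOfUnity, Nat.card_eq_fintype_card]

theorem charEval_injective : Function.Injective (charEval F T) := by
  classical
  refine (injective_iff_map_eq_zero _).mpr fun f hf => ?_
  -- `f` is orthogonal to every character, and the characters span `T → F`.
  let ℓ : (T → F) →ₗ[F] F := ∑ t, f.coeff t • LinearMap.proj t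
  have hℓ : ℓ = 0 := by
    refine LinearMap.ext_on_range (span_range_coe_characters F T) fun χ => ?_
    simpa [ℓ, charEval, lift_apply, Finsupp.sum_fintype, mul_comm] using congrFun hf χ
  ext t
  simpa [ℓ, Pi.single_apply] using LinearMap.congr_fun hℓ (Pi.single t 1)

theorem charEval_bijective : Function.Bijective (charEval F T) := by
  have : Fintype (T →* Fˣ) := Fintype.ofFinite _
  refine ⟨charEval_injective F T, ?_⟩
  refine (LinearMap.injective_iff_surjective_of_finrank_eq_finrank
    (f := (charEval F T).toLinearMap) ?_).mp (charEval_injective F T)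
  rw [Module.finrank_fintype_fun_eq_card, ← Nat.card_eq_fintype_card,
    CommGroup.card_monoidHom_of_hasEnoughRootsOfUnity,
    Module.finrank_eq_card_basis (MonoidAlgebra.basis T F), Nat.card_eq_fintype_card]

end Characters

section NilIdeal

variable {k G : Type*} [CommRing k] [Group G]

theorem single_sub_one_pow_char (p : ℕ) [Fact p.Prime] [CharP k p] {r : G} (hr : r ^ p = 1) :
    (single r (1 : k) - 1) ^ p = 0 := by
  have : CharP (MonoidAlgebra k G) p := charP_of_injective_algebraMap' k p
  rw [sub_pow_char_of_commute _ (Commute.one_right _), single_pow, hr, one_pow, one_pow,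
    ← one_def, sub_self]

variable [Finite G]

theorem single_sub_one_mul_mem_span (r : G) [(Subgroup.zpowers r).Normal]
    (z : MonoidAlgebra k G) :
    (single r 1 - 1) * z ∈ Ideal.span {single r (1 : k) - 1} := by
  induction z using MonoidAlgebra.induction_linear with
  | zero => simp
  | add f g hf hg => rw [mul_add]; exact add_mem hf hg
  | single g c =>
    obtain ⟨m, hm⟩ : ∃ m : ℕ, r ^ m = g⁻¹ * r * g := by
      rw [← Submonoid.mem_powers_iff, mem_powers_iff_mem_zpowers]
      simpa using Subgroup.Normal.conj_mem inferInstance r (Subgroup.mem_zpowers r) g⁻¹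
    have : (single r 1 - 1) * single g c = single g c * (single r 1 ^ m - 1) := by
      rw [single_pow, one_pow, hm, sub_mul, mul_sub, single_mul_single, single_mul_single]
      simp [mul_assoc]
    rw [this]
    exact Ideal.mul_mem_left _ _ (Ideal.pow_sub_one_mem_span_sub_one _ m)

theorem pow_char_eq_zero_of_mem_span (p : ℕ) [Fact p.Prime] [CharP k p] {r : G}
    [(Subgroup.zpowers r).Normal] (hr : r ^ p = 1) {x : MonoidAlgebra k G}
    (hx : x ∈ Ideal.span {single r (1 : k) - 1}) : x ^ p = 0 :=
  Ideal.pow_eq_zero_of_mem_span_singleton (single_sub_one_mul_mem_span r)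
    (single_sub_one_pow_char p hr) hx

variable {T : Type*} [Group T]

theorem sub_mapDomain_mem_span (π : G →* T) (ι : T →* G) (hπι : π.comp ι = MonoidHom.id T)
    {r : G} (hker : π.ker ≤ Subgroup.zpowers r) (f : MonoidAlgebra k G) :
    f - mapDomainRingHom k ι (mapDomainRingHom k π f) ∈ Ideal.span {single r (1 : k) - 1} := by
  induction f using MonoidAlgebra.induction_linear with
  | zero => simp
  | add f g hf hg => simpa only [map_add, add_sub_add_comm] using add_mem hf hg
  | single g c =>
    obtain ⟨m, hm⟩ : ∃ m : ℕ, r ^ m = (ι (π g))⁻¹ * g := by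
      rw [← Submonoid.mem_powers_iff, mem_powers_iff_mem_zpowers]
      refine hker ?_
      simp [MonoidHom.mem_ker, ← MonoidHom.comp_apply π ι, hπι]
    have : single g c - single (ι (π g)) c = single (ι (π g)) c * (single r 1 ^ m - 1) := by
      rw [single_pow, one_pow, hm, mul_sub, single_mul_single]
      simp
    simp only [mapDomainRingHom_apply, mapDomain_single]
    rw [this]
    exact Ideal.mul_mem_left _ _ (Ideal.pow_sub_one_mem_span_sub_one _ m)

theorem ker_mapDomain_le_span (π : G →* T) (ι : T →* G) (hπι : π.comp ι = MonoidHom.id T)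
    {r : G} (hker : π.ker ≤ Subgroup.zpowers r) :
    RingHom.ker (mapDomainRingHom k π) ≤ Ideal.span {single r (1 : k) - 1} := by
  intro f hf
  simpa [RingHom.mem_ker.mp hf] using sub_mapDomain_mem_span π ι hπι hker f

end NilIdeal

theorem exists_units_mulEquiv_semidirectProduct {k G T Q : Type*} [Field k] [Group G] [Finite G]
    [CommGroup T] [Fintype T] [HasEnoughRootsOfUnity k (Monoid.exponent T)] [Group Q]
    (p : ℕ) [Fact p.Prime] [CharP k p] (π : G →* T) (ι : T →* G)
    (hπι : π.comp ι = MonoidHom.id T) {r : G} (hker : π.ker = Subgroup.zpowers r)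
    (hr : r ^ p = 1) (E : ((T →* kˣ) → k)ˣ ≃* Q) :
    ∃ H : Subgroup (MonoidAlgebra k G)ˣ,
      (∀ u : (MonoidAlgebra k G)ˣ,
        u ∈ H ↔ (u : MonoidAlgebra k G) - 1 ∈ Ideal.jacobson (⊥ : Ideal (MonoidAlgebra k G))) ∧
      ∃ φ : Q →* MulAut H, Nonempty ((MonoidAlgebra k G)ˣ ≃* H ⋊[φ] Q) := by
  have : (Subgroup.zpowers r).Normal := hker ▸ π.normal_ker
  let e := RingEquiv.ofBijective (charEval k T) (charEval_bijective k T)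
  let ρ := e.toRingHom.comp (mapDomainRingHom k π)
  let s := (mapDomainRingHom k ι).comp e.symm.toRingHom
  have hσψ : (mapDomainRingHom k π).comp (mapDomainRingHom k ι) = RingHom.id _ := by
    rw [← mapDomainRingHom_comp, hπι, mapDomainRingHom_id]
  have hs : ρ.comp s = RingHom.id _ := by
    ext1 y
    change e ((mapDomainRingHom k π).comp (mapDomainRingHom k ι) (e.symm y)) = y
    rw [hσψ, RingHom.id_apply, e.apply_symm_apply]
  have hsurj : Function.Surjective ρ := fun y => ⟨s y, RingHom.congr_fun hs y⟩
  have hker_ρ : RingHom.ker ρ = RingHom.ker (mapDomainRingHom k π) :=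
    RingHom.ker_comp_of_injective _ e.injective
  have hjac : Ideal.jacobson ⊥ = RingHom.ker ρ := by
    refine Ideal.jacobson_bot_eq_ker_of_isNilpotent ρ hsurj fun x hx => ⟨p, ?_⟩
    rw [hker_ρ] at hx
    exact pow_char_eq_zero_of_mem_span p hr (ker_mapDomain_le_span π ι hπι hker.le hx)
  simpa only [hjac] using Units.exists_semidirectProduct_of_comp_eq_id ρ s hs E

end MonoidAlgebra

namespace DihedralGroup

variable (n : ℕ)

def sign : DihedralGroup n →* Multiplicative (ZMod 2) where
  toFun
    | r _ => 1
    | sr _ => Multiplicative.ofAdd 1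
  map_one' := rfl
  map_mul' x y := by
    rcases x with i | i <;> rcases y with j | j <;>
      simp only [r_mul_r, r_mul_sr, sr_mul_r, sr_mul_sr] <;> rfl

def reflection : Multiplicative (ZMod 2) →* DihedralGroup n where
  toFun b := sr 0 ^ (Multiplicative.toAdd b).val
  map_one' := rfl
  map_mul' a b := by
    rw [toAdd_mul, ZMod.val_add, ← pow_add]
    simpa only [orderOf_sr] using pow_mod_orderOf (sr (0 : ZMod n)) _

theorem sign_comp_reflection : (sign n).comp (reflection n) = MonoidHom.id _ := by
  ext b
  fin_cases b <;> rfl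

variable {H : Type*} [Group H]

theorem prodMap_sign_comp_prodMap_reflection :
    ((MonoidHom.id H).prodMap (sign n)).comp ((MonoidHom.id H).prodMap (reflection n)) =
      MonoidHom.id _ := by
  ext ⟨a, b⟩
  · rfl
  · exact DFunLike.congr_fun (sign_comp_reflection n) b

variable {n}

theorem ker_prodMap_sign :
    ((MonoidHom.id H).prodMap (sign n)).ker = Subgroup.zpowers ((1 : H), r 1) := by
  refine le_antisymm (fun ⟨a, d⟩ h => ?_) (Subgroup.zpowers_le.mpr rfl)
  obtain ⟨rfl, hd⟩ : a = 1 ∧ sign n d = 1 := by simpa [Prod.ext_iff] using h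
  rcases d with i | i
  · refine ⟨i.cast, ?_⟩
    simp
  · exact absurd hd (show Multiplicative.ofAdd (1 : ZMod 2) ≠ 1 by decide)

end DihedralGroup

theorem stmt_15_general (F : Type) [Field F] [Fintype F] (k : ℕ)
    (hchar : CharP F 5) (hcard : Fintype.card F = 5 ^ k)
    (hq : 5 ^ k % 6 = 1) :
    let G := Multiplicative (ZMod 3) × DihedralGroup 5
    ∃ H : Subgroup (MonoidAlgebra F G)ˣ,
      (∀ u : (MonoidAlgebra F G)ˣ,
        u ∈ H ↔ (u : MonoidAlgebra F G) - 1 ∈ Ideal.jacobson (⊥ : Ideal (MonoidAlgebra F G))) ∧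
      ∃ φ : (Fin 6 → Multiplicative (ZMod (5 ^ k - 1))) →* MulAut H,
        Nonempty ((MonoidAlgebra F G)ˣ ≃*
          H ⋊[φ] (Fin 6 → Multiplicative (ZMod (5 ^ k - 1)))) := by
  intro G
  let T := Multiplicative (ZMod 3) × Multiplicative (ZMod 2)
  have : Fact (Nat.Prime 5) := ⟨by norm_num⟩
  have : HasEnoughRootsOfUnity F 6 := FiniteField.hasEnoughRootsOfUnity_of_dvd (by omega)
  have : HasEnoughRootsOfUnity F (Monoid.exponent T) :=
    .of_dvd F (n := 6) (Group.exponent_dvd_card (G := T))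
  have hX : Nat.card (T →* Fˣ) = 6 := by
    rw [CommGroup.card_monoidHom_of_hasEnoughRootsOfUnity]
    simp [T, Nat.card_eq_fintype_card]
  have hU : Nat.card Fˣ = Nat.card (Multiplicative (ZMod (5 ^ k - 1))) := by
    rw [Nat.card_units, Nat.card_eq_fintype_card, hcard]
    exact (Nat.card_zmod _).symm
  let E : ((T →* Fˣ) → F)ˣ ≃* (Fin 6 → Multiplicative (ZMod (5 ^ k - 1))) :=
    MulEquiv.piUnits.trans
      (MulEquiv.arrowCongr (Finite.equivFinOfCardEq hX) (mulEquivOfCyclicCardEq hU))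
  exact MonoidAlgebra.exists_units_mulEquiv_semidirectProduct 5
    ((MonoidHom.id _).prodMap (DihedralGroup.sign 5))
    ((MonoidHom.id _).prodMap (DihedralGroup.reflection 5))
    (DihedralGroup.prodMap_sign_comp_prodMap_reflection 5) DihedralGroup.ker_prodMap_sign
    (by rw [Prod.pow_mk, one_pow, DihedralGroup.r_one_pow_n]; rfl) E

/-- For `F` a finite field with `5^k` elements, `5^k ≡ 1 (mod 6)`, and `G = C₃ × D₁₀`,
the unit group of `FG` is isomorphic to `V ⋊ C_{5^k-1}⁶` where `V = 1 + J(FG)`. -/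
theorem stmt_15 (F : Type) [Field F] [Fintype F] (k : ℕ) (hk : 0 < k)
    (hchar : CharP F 5) (hcard : Fintype.card F = 5 ^ k)
    (hq : 5 ^ k % 6 = 1) :
    let G := Multiplicative (ZMod 3) × DihedralGroup 5
    ∃ H : Subgroup (MonoidAlgebra F G)ˣ,
      (∀ u : (MonoidAlgebra F G)ˣ,
        u ∈ H ↔ (u : MonoidAlgebra F G) - 1 ∈ Ideal.jacobson (⊥ : Ideal (MonoidAlgebra F G))) ∧
      ∃ φ : (Fin 6 → Multiplicative (ZMod (5 ^ k - 1))) →* MulAut H,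
        Nonempty ((MonoidAlgebra F G)ˣ ≃*
          H ⋊[φ] (Fin 6 → Multiplicative (ZMod (5 ^ k - 1)))) :=
  stmt_15_general F k hchar hcard hq
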